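/- Let m be a positive even number. For all finite sets A₁, A₂ ⊆ Fin m with |A₁| ≤ m/2 − 1 and |A₂| ≤ m/2 − 1, the matrices X(v_{A₁}) and Z(v_{A₂}) commute: X(v_{A₁}) * Z(v_{A₂}) = Z(v_{A₂}) * X(v_{A₁}). (Hence every X-type stabilizer generator of the quantum Reed–Muller code QRM(m) commutes with every Z-type stabilizer generator.) -/
import Mathlib


/-- The vector `v_A` : its value at a label `x : Fin m → ZMod 2` is `∏_{a ∈ A} x a`. -/
def vA (m : ℕ) (A : Finset (Fin m)) : (Fin m → ZMod 2) → ZMod 2 :=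
  fun x => ∏ a ∈ A, x a

/-- Basis states: functions from qubit labels to `ZMod 2`. -/
abbrev St (m : ℕ) := (Fin m → ZMod 2) → ZMod 2

/-- The Pauli-X type operator `X(w)`: the matrix with `(y, x)` entry `1` if
`y = x + w` and `0` otherwise. -/
noncomputable def Xmat (m : ℕ) (w : St m) : Matrix (St m) (St m) ℂ :=
  Matrix.of fun y x => if y = x + w then 1 else 0

/-- `N(w, x)`: the number of qubits `q` with `w q = 1` and `x q = 1`. -/
def Nwt (m : ℕ) (w x : St m) : ℕ :=
  (Finset.univ.filter (fun q => w q = 1 ∧ x q = 1)).card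

/-- The Pauli-Z type operator `Z(w)`: the diagonal matrix with `(x, x)` entry
`(-1) ^ N(w, x)`. -/
noncomputable def Zmat (m : ℕ) (w : St m) : Matrix (St m) (St m) ℂ :=
  Matrix.diagonal fun x => (-1) ^ Nwt m w x

lemma zmod2_cases (z : ZMod 2) : z = 0 ∨ z = 1 := by revert z; decide

lemma char_eq (m : ℕ) (w x : St m) :
    ((-1 : ℂ)) ^ Nwt m w x = ∏ q, (if w q = 1 ∧ x q = 1 then (-1 : ℂ) else 1) := by
  rw [Nwt, ← Finset.prod_const, Finset.prod_filter]

lemma char_mul (m : ℕ) (w x y : St m) :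
    ((-1 : ℂ)) ^ Nwt m w (x + y) =
      ((-1 : ℂ)) ^ Nwt m w x * ((-1 : ℂ)) ^ Nwt m w y := by
  rw [char_eq, char_eq, char_eq, ← Finset.prod_mul_distrib]
  refine Finset.prod_congr rfl fun q _ => ?_
  have hx := zmod2_cases (x q); have hy := zmod2_cases (y q)
  have hw := zmod2_cases (w q)
  simp only [Pi.add_apply]
  rcases hw with hw | hw <;> rcases hx with hx | hx <;> rcases hy with hy | hy <;>
    simp [hw, hx, hy]

lemma vA_eq_one_iff (m : ℕ) (A : Finset (Fin m)) (q : Fin m → ZMod 2) :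
    vA m A q = 1 ↔ ∀ a ∈ A, q a = 1 := by
  constructor
  · intro h
    by_contra hc
    push_neg at hc
    obtain ⟨a, ha, hqa⟩ := hc
    have h0 : q a = 0 := (zmod2_cases (q a)).resolve_right hqa
    have : vA m A q = 0 := Finset.prod_eq_zero ha h0
    rw [this] at h; exact absurd h (by decide)
  · exact fun h => Finset.prod_eq_one h

lemma overlap_even (m : ℕ) (hm : Even m) (h0 : 0 < m) (A₁ A₂ : Finset (Fin m))
    (h1 : A₁.card ≤ m / 2 - 1) (h2 : A₂.card ≤ m / 2 - 1) :
    Even (Nwt m (vA m A₂) (vA m A₁)) := by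
  have hcard : (A₁ ∪ A₂).card < m := by
    have := Finset.card_union_le A₁ A₂
    obtain ⟨k, hk⟩ := hm
    have hk1 : 1 ≤ k := by omega
    have : (A₁ ∪ A₂).card ≤ m - 2 := by subst hk; omega
    omega
  obtain ⟨a₀, ha₀⟩ : ∃ a₀ : Fin m, a₀ ∉ A₁ ∪ A₂ := by
    by_contra hc
    push_neg at hc
    have : (A₁ ∪ A₂) = Finset.univ := Finset.eq_univ_iff_forall.2 hc
    rw [this, Finset.card_univ, Fintype.card_fin] at hcard; omega
  have ha1 : a₀ ∉ A₁ := fun h => ha₀ (Finset.mem_union_left _ h)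
  have ha2 : a₀ ∉ A₂ := fun h => ha₀ (Finset.mem_union_right _ h)
  set S := Finset.univ.filter
      (fun q : Fin m → ZMod 2 => vA m A₂ q = 1 ∧ vA m A₁ q = 1) with hS
  have key : ∑ q ∈ S, (1 : ZMod 2) = 0 := by
    apply Finset.sum_involution
      (g := fun q _ => Function.update q a₀ (q a₀ + 1))
    · intro q hq; decide
    · intro q hq _
      intro hcontra
      have := congrFun hcontra a₀
      rw [Function.update_self] at this
      have hz := zmod2_cases (q a₀)
      rcases hz with h | h <;> rw [h] at this <;> exact absurd this (by decide)
    · intro q hq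
      funext b
      by_cases hb : b = a₀
      · subst hb
        simp [Function.update_self]
        have hz := zmod2_cases (q b)
        rcases hz with h | h <;> rw [h] <;> decide
      · simp [Function.update_of_ne hb]
    · intro q hq
      rw [hS, Finset.mem_filter] at hq ⊢
      simp only [vA_eq_one_iff] at hq ⊢
      refine ⟨Finset.mem_univ _, ?_, ?_⟩
      · intro a ha
        rw [Function.update_of_ne (by rintro rfl; exact ha2 ha)]
        exact hq.2.1 a ha
      · intro a ha
        rw [Function.update_of_ne (by rintro rfl; exact ha1 ha)]
        exact hq.2.2 a ha
  rw [Finset.sum_const, nsmul_eq_mul, mul_one] at key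
  exact even_iff_two_dvd.2 ((ZMod.natCast_eq_zero_iff _ 2).1 key)

/-- For a positive even `m` and `A₁, A₂ ⊆ Fin m` of size at most `m/2 - 1`,
the matrices `X(v_{A₁})` and `Z(v_{A₂})` commute (every X-type stabilizer
generator of `QRM(m)` commutes with every Z-type stabilizer generator). -/
theorem stmt4 (m : ℕ) (hm : Even m) (h0 : 0 < m) (A₁ A₂ : Finset (Fin m))
    (h1 : A₁.card ≤ m / 2 - 1) (h2 : A₂.card ≤ m / 2 - 1) :
    Xmat m (vA m A₁) * Zmat m (vA m A₂) = Zmat m (vA m A₂) * Xmat m (vA m A₁) := by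
  ext y x
  rw [Zmat, Matrix.mul_diagonal, Matrix.diagonal_mul]
  simp only [Xmat, Matrix.of_apply]
  split_ifs with h
  · subst h
    rw [one_mul, mul_one, char_mul]
    rw [(overlap_even m hm h0 A₁ A₂ h1 h2).neg_one_pow, mul_one]
  · ring
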